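/- arXiv:0908.0995 — 2 statements merged into one kernel-verified Lean document; each statement's English description precedes it below -/
import Mathlib

section
/- Let Γ be a δ-hyperbolic geodesic space and let a be a hyperbolic isometry of Γ admitting a geodesic quasi-axis α, i.e., a geodesic α such that a(α) is contained in the C-neighborhood of α for some C ≥ 0. Then a(α) is contained in the 2δ-neighborhood of α. -/
open Filter Metric Set

/-- A geodesic segment from `x` to `y`: the image of an isometric parametrization
of the interval `[0, dist x y]`. -/
def IsGeodesicSegment {X : Type*} [MetricSpace X] (s : Set X) (x y : X) : Prop :=
  ∃ γ : ℝ → X, γ 0 = x ∧ γ (dist x y) = y ∧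
    (∀ u ∈ Set.Icc (0:ℝ) (dist x y), ∀ v ∈ Set.Icc (0:ℝ) (dist x y),
      dist (γ u) (γ v) = |u - v|) ∧ s = γ '' Set.Icc (0:ℝ) (dist x y)

/-- A geodesic metric space: any two points are joined by a geodesic segment. -/
def GeodesicSpace (X : Type*) [MetricSpace X] : Prop :=
  ∀ x y : X, ∃ s : Set X, IsGeodesicSegment s x y

/-- `δ`-hyperbolicity via thin triangles: each side of a geodesic triangle is contained
in the `δ`-neighborhood of the union of the other two sides. -/
def DeltaHyperbolic (X : Type*) [MetricSpace X] (δ : ℝ) : Prop :=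
  ∀ x y z : X, ∀ s t u : Set X, IsGeodesicSegment s x y → IsGeodesicSegment t y z →
    IsGeodesicSegment u x z → ∀ p ∈ u, ∃ q ∈ s ∪ t, dist p q ≤ δ

/-- A bi-infinite geodesic line, parametrized by arclength. -/
def IsGeodesicLine {X : Type*} [MetricSpace X] (α : ℝ → X) : Prop :=
  ∀ s t : ℝ, dist (α s) (α t) = |s - t|

/-- The `10δ`-overlap `α ∩_{10δ} β = (α ∩ N_{10δ}(β)) ∪ (β ∩ N_{10δ}(α))`
of two geodesic lines. -/
def OverlapSet {X : Type*} [MetricSpace X] (δ : ℝ) (α β : ℝ → X) : Set X :=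
  (Set.range α ∩ {x | ∃ t : ℝ, dist x (β t) ≤ 10 * δ}) ∪
  (Set.range β ∩ {x | ∃ t : ℝ, dist x (α t) ≤ 10 * δ})

/-- Translation length of an isometry: `tr a = lim dist x (aⁿ x) / n` (for every basepoint). -/
def HasTransLengthIso {X : Type*} [MetricSpace X] (a : X ≃ᵢ X) (τ : ℝ) : Prop :=
  ∀ x : X, Filter.Tendsto (fun n : ℕ => dist x ((a ^ n) x) / (n : ℝ))
    Filter.atTop (nhds τ)

/-- An isometry is hyperbolic if some orbit moves at least linearly. -/
def IsHyperbolicIso {X : Type*} [MetricSpace X] (a : X ≃ᵢ X) : Prop :=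
  ∃ (x : X) (C : ℝ), 0 < C ∧ ∀ n : ℕ, 0 < n → C * (n : ℝ) ≤ dist x ((a ^ n) x)

/-- A (geodesic) quasi-axis of an isometry `a`: a geodesic line `α` with `a(α) ⊆ N_C(α)`
for some `C ≥ 0`. -/
def IsQuasiAxisIso {X : Type*} [MetricSpace X] (a : X ≃ᵢ X) (α : ℝ → X) : Prop :=
  IsGeodesicLine α ∧ ∃ C : ℝ, 0 ≤ C ∧ ∀ t : ℝ, ∃ s : ℝ, dist (a (α t)) (α s) ≤ C

lemma isGeodesicSegment_singleton {X : Type*} [MetricSpace X] (x : X) :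
    IsGeodesicSegment {x} x x :=
  ⟨fun _ => x, rfl, rfl, fun u hu v hv => by
    simp only [dist_self, mem_Icc] at hu hv ⊢
    rw [le_antisymm hu.2 hu.1, le_antisymm hv.2 hv.1, sub_self, abs_zero], by simp⟩

lemma DeltaHyperbolic.nonneg {X : Type*} [MetricSpace X] {δ : ℝ} (hδ : DeltaHyperbolic X δ)
    (x : X) : 0 ≤ δ := by
  have hx := isGeodesicSegment_singleton x
  obtain ⟨q, hq, hxq⟩ := hδ x x x {x} {x} {x} hx hx hx x rfl
  rw [union_self, mem_singleton_iff] at hq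
  rwa [hq, dist_self] at hxq

namespace IsGeodesicSegment

variable {X : Type*} [MetricSpace X] {s : Set X} {x y : X}

lemma dist_left_le (h : IsGeodesicSegment s x y) {q : X} (hq : q ∈ s) :
    dist x q ≤ dist x y := by
  obtain ⟨γ, h0, -, hiso, rfl⟩ := h
  obtain ⟨u, hu, rfl⟩ := hq
  have hγu := hiso 0 ⟨le_rfl, dist_nonneg⟩ u hu
  rw [h0, zero_sub, abs_neg, abs_of_nonneg hu.1] at hγu
  exact hγu.symm ▸ hu.2

lemma symm (h : IsGeodesicSegment s x y) : IsGeodesicSegment s y x := by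
  obtain ⟨γ, h0, hD, hiso, rfl⟩ := h
  set D := dist x y
  have hreflect : ∀ u ∈ Icc 0 D, D - u ∈ Icc 0 D := fun u hu =>
    ⟨by linarith [hu.2], by linarith [hu.1]⟩
  refine ⟨fun u => γ (D - u), ?_, ?_, fun u hu v hv => ?_, ?_⟩
  · simpa [D] using hD
  · simpa [dist_comm y x, D] using h0
  · rw [dist_comm y x] at hu hv
    rw [hiso _ (hreflect u hu) _ (hreflect v hv), abs_sub_comm]
    ring_nf
  · rw [dist_comm y x, ← image_image γ (fun u => D - u), image_const_sub_Icc, sub_zero, sub_self]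

end IsGeodesicSegment

namespace IsGeodesicLine

variable {X : Type*} [MetricSpace X] {α : ℝ → X}

lemma isometry_comp {Y : Type*} [MetricSpace Y] {f : X → Y} (hf : Isometry f)
    (hα : IsGeodesicLine α) : IsGeodesicLine (f ∘ α) := fun s t => by
  rw [Function.comp_apply, Function.comp_apply, hf.dist_eq, hα]

lemma isGeodesicSegment_image_Icc (hα : IsGeodesicLine α) {s₁ s₂ : ℝ} (h : s₁ ≤ s₂) :
    IsGeodesicSegment (α '' Icc s₁ s₂) (α s₁) (α s₂) := by
  have hD : dist (α s₁) (α s₂) = s₂ - s₁ := by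
    rw [hα, abs_sub_comm, abs_of_nonneg (sub_nonneg.2 h)]
  refine ⟨fun u => α (s₁ + u), by simp, by simp [hD], fun u _ v _ => ?_, ?_⟩
  · rw [hα, add_sub_add_left_eq_sub]
  · rw [hD, ← image_image α (fun u => s₁ + u), image_const_add_Icc, add_zero, add_sub_cancel]

lemma exists_isGeodesicSegment_subset_range (hα : IsGeodesicLine α) (s₁ s₂ : ℝ) :
    ∃ A : Set X, IsGeodesicSegment A (α s₁) (α s₂) ∧ A ⊆ range α := by
  rcases le_total s₁ s₂ with h | h
  · exact ⟨_, hα.isGeodesicSegment_image_Icc h, image_subset_range _ _⟩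
  · exact ⟨_, (hα.isGeodesicSegment_image_Icc h).symm, image_subset_range _ _⟩

end IsGeodesicLine

namespace DeltaHyperbolic

variable {X : Type*} [MetricSpace X] {δ : ℝ} {x y z p : X} {s t u : Set X}

/-- Such a point `p` cannot be `δ`-close to `[x, y]`, all of whose points lie within
`dist x y` of `x`. -/
lemma exists_mem_right_near_of_far (hδ : DeltaHyperbolic X δ) (hs : IsGeodesicSegment s x y)
    (ht : IsGeodesicSegment t y z) (hu : IsGeodesicSegment u x z) (hp : p ∈ u)
    (hfar : dist x y + δ < dist p x) : ∃ q ∈ t, dist p q ≤ δ := by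
  obtain ⟨q, hq | hq, hpq⟩ := hδ x y z s t u hs ht hu p hp
  · have := dist_triangle_right p x q
    linarith [hs.dist_left_le hq]
  · exact ⟨q, hq, hpq⟩

lemma exists_mem_left_near_of_far (hδ : DeltaHyperbolic X δ) (hs : IsGeodesicSegment s x y)
    (ht : IsGeodesicSegment t y z) (hu : IsGeodesicSegment u x z) (hp : p ∈ u)
    (hfar : dist y z + δ < dist p z) : ∃ q ∈ s, dist p q ≤ δ :=
  hδ.exists_mem_right_near_of_far ht.symm hs.symm hu.symm hp (by rwa [dist_comm z y])

end DeltaHyperbolic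

/-- The point `a (α t)` is the midpoint of a long segment of the geodesic `a ∘ α` whose
endpoints are `C`-close to `α`. By thinness it is `δ`-close to a geodesic joining those two
nearby points of `α`, and that geodesic is in turn `δ`-close to `α` away from its ends. -/
theorem quasi_axis_two_delta_invariant_general
    {X : Type*} [MetricSpace X] {δ : ℝ}
    (hgeo : GeodesicSpace X) (hδ : DeltaHyperbolic X δ)
    (a : X ≃ᵢ X) (α : ℝ → X) (hα : IsQuasiAxisIso a α) :
    ∀ t : ℝ, ∃ s : ℝ, dist (a (α t)) (α s) ≤ 2 * δ := by
  obtain ⟨hline, C, hC0, hqa⟩ := hα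
  intro t
  have hδ0 := hδ.nonneg (α t)
  set R := C + 2 * δ + 1
  have hR : 0 < R := by linarith
  have hβ : IsGeodesicLine (a ∘ α) := hline.isometry_comp a.isometry
  have hU := hβ.isGeodesicSegment_image_Icc (s₁ := t - R) (s₂ := t + R) (by linarith)
  have hpU : a (α t) ∈ (a ∘ α) '' Icc (t - R) (t + R) :=
    mem_image_of_mem _ ⟨by linarith, by linarith⟩
  obtain ⟨s₁, hs₁⟩ := hqa (t - R)
  obtain ⟨s₂, hs₂⟩ := hqa (t + R)
  obtain ⟨S, hS⟩ := hgeo (a (α (t - R))) (α s₁)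
  obtain ⟨T, hT⟩ := hgeo (α s₁) (a (α (t + R)))
  obtain ⟨T', hT'⟩ := hgeo (α s₂) (a (α (t + R)))
  obtain ⟨A, hA, hAα⟩ := hline.exists_isGeodesicSegment_subset_range s₁ s₂
  have hleft : dist (a (α t)) (a (α (t - R))) = R := by simpa [abs_of_pos hR] using hβ t (t - R)
  have hright : dist (a (α t)) (a (α (t + R))) = R := by simpa [abs_of_pos hR] using hβ t (t + R)
  obtain ⟨q, hqT, hpq⟩ := hδ.exists_mem_right_near_of_far hS hT hU hpU
    (by linarith [dist_comm (a (α (t - R))) (α s₁)])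
  obtain ⟨q', hq'A, hqq'⟩ := hδ.exists_mem_left_near_of_far hA hT' hT hqT
    (by linarith [dist_triangle (a (α t)) q (a (α (t + R))), dist_comm (α s₂) (a (α (t + R)))])
  obtain ⟨s, rfl⟩ := hAα hq'A
  exact ⟨s, by linarith [dist_triangle (a (α t)) q (α s)]⟩

/-- In a `δ`-hyperbolic geodesic space, if a hyperbolic isometry `a` has a
geodesic quasi-axis `α` (i.e. `a(α) ⊆ N_C(α)` for some `C ≥ 0`), then in fact
`a(α)` is contained in the `2δ`-neighborhood of `α`. -/
theorem quasi_axis_two_delta_invariant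
    {X : Type*} [MetricSpace X] {δ : ℝ}
    (hgeo : GeodesicSpace X) (hδ : DeltaHyperbolic X δ)
    (a : X ≃ᵢ X) (ha : IsHyperbolicIso a) (α : ℝ → X) (hα : IsQuasiAxisIso a α) :
    ∀ t : ℝ, ∃ s : ℝ, dist (a (α t)) (α s) ≤ 2 * δ :=
  quasi_axis_two_delta_invariant_general hgeo hδ a α hα
end

section
/- Let Γ be a δ-hyperbolic geodesic space, ε > 100δ a constant, and (p_i)_{i≥1} a sequence of points such that for all i ≥ 1, d(p_i, p_{i+2}) ≥ max(d(p_i, p_{i+1}), d(p_{i+1}, p_{i+2})) + ε. Then for each i ≥ 3, λ · d(p_1, p_i) ≥ Σ_{j=1}^{i-1} d(p_j, p_{j+1}), where λ = (ε/100 − δ)^{-1} · max_{1 ≤ j ≤ i−1} d(p_j, p_{j+1}). In particular, d(p_1, p_i) > 0 for all i ≥ 3. -/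
/-!
Thin triangles give Gromov's four point condition
`min ((x | y)_w, (y | z)_w) ≤ (x | z)_w + 3δ`. Applied at `p (i+1)` to `p i, p 1, p (i+2)` it
propagates the estimate `2 (p 1 | p (i+1))_{p i} ≤ d(p i, p (i+1)) - ε + 6δ` along the sequence:
the three points condition makes `(p i | p (i+2))_{p (i+1)}` small, and the other branch of the
minimum would contradict the previous estimate. Equivalently
`d(p 1, p (i+1)) ≥ d(p 1, p i) + ε - 6δ`, so `d(p 1, p i) ≥ (i - 1)(ε - 6δ)`, while the sum
of the `i - 1` steps is at most `(i - 1) · max`; finally `ε - 6δ ≥ ε/100 - δ`.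
-/

open Filter Metric Set

noncomputable def gromovProduct {X : Type*} [MetricSpace X] (w x y : X) : ℝ :=
  (dist w x + dist w y - dist x y) / 2

def FourPointCondition (X : Type*) [MetricSpace X] (κ : ℝ) : Prop :=
  ∀ w x y z : X, min (gromovProduct w x y) (gromovProduct w y z) ≤ gromovProduct w x z + κ

def ThreePointsCondition {X : Type*} [MetricSpace X] (p : ℕ → X) (ε : ℝ) : Prop :=
  ∀ i : ℕ, 1 ≤ i →
    max (dist (p i) (p (i+1))) (dist (p (i+1)) (p (i+2))) + ε ≤ dist (p i) (p (i+2))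

namespace IsGeodesicSegment

variable {X : Type*} [MetricSpace X] {s : Set X} {x y : X}

lemma right_mem (h : IsGeodesicSegment s x y) : y ∈ s := by
  obtain ⟨γ, -, hγy, -, rfl⟩ := h
  exact ⟨dist x y, ⟨dist_nonneg, le_rfl⟩, hγy⟩

lemma dist_add_dist_eq (h : IsGeodesicSegment s x y) {q : X} (hq : q ∈ s) :
    dist x q + dist q y = dist x y := by
  obtain ⟨γ, hγx, hγy, hγ, rfl⟩ := h
  obtain ⟨t, ht, rfl⟩ := hq
  have h0 : (0 : ℝ) ∈ Set.Icc 0 (dist x y) := ⟨le_rfl, dist_nonneg⟩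
  have h1 : dist x y ∈ Set.Icc 0 (dist x y) := ⟨dist_nonneg, le_rfl⟩
  have hxq := hγ 0 h0 t ht
  have hqy := hγ t ht (dist x y) h1
  rw [hγx] at hxq
  rw [hγy] at hqy
  rw [hxq, hqy, abs_of_nonpos (by linarith [ht.1]), abs_of_nonpos (by linarith [ht.2])]
  ring

lemma exists_dist_eq (h : IsGeodesicSegment s x y) {t : ℝ} (ht₀ : 0 ≤ t)
    (ht : t ≤ dist x y) : ∃ u ∈ s, dist x u = t := by
  obtain ⟨γ, hγx, -, hγ, rfl⟩ := h
  refine ⟨γ t, ⟨t, ⟨ht₀, ht⟩, rfl⟩, ?_⟩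
  rw [← hγx, hγ 0 ⟨le_rfl, dist_nonneg⟩ t ⟨ht₀, ht⟩, zero_sub, abs_neg,
    abs_of_nonneg ht₀]

lemma gromovProduct_le_dist (h : IsGeodesicSegment s x y) (w : X) {q : X} (hq : q ∈ s) :
    gromovProduct w x y ≤ dist w q := by
  have := h.dist_add_dist_eq hq
  have := dist_triangle w q x
  have := dist_triangle w q y
  unfold gromovProduct
  linarith [dist_comm q x]

end IsGeodesicSegment

namespace DeltaHyperbolic

variable {X : Type*} [MetricSpace X] {δ : ℝ}

lemma nonneg_s5 (hgeo : GeodesicSpace X) (hδ : DeltaHyperbolic X δ) (x : X) : 0 ≤ δ := by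
  obtain ⟨s, hs⟩ := hgeo x x
  obtain ⟨q, -, hq⟩ := hδ x x x s s s hs hs hs x hs.right_mem
  exact dist_nonneg.trans hq

lemma exists_mem_dist_le_gromovProduct (hgeo : GeodesicSpace X) (hδ : DeltaHyperbolic X δ)
    (a : X) {b c : X} {s : Set X} (hs : IsGeodesicSegment s b c) {η : ℝ} (hη : 0 < η) :
    ∃ q ∈ s, dist a q ≤ gromovProduct a b c + 2 * δ + η := by
  have hδ₀ := hδ.nonneg_s5 hgeo a
  obtain ⟨sab, hab⟩ := hgeo a b
  obtain ⟨sac, hac⟩ := hgeo a c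
  have close_ab : ∀ u ∈ sac, ∀ v ∈ sab, dist u v ≤ δ →
      dist a u ≤ gromovProduct a b c + δ := by
    intro u hu v hv huv
    have := hab.dist_add_dist_eq hv
    have := hac.dist_add_dist_eq hu
    have := dist_triangle a v u
    have := dist_triangle4 b v u c
    unfold gromovProduct
    linarith [dist_comm b v, dist_comm u v]
  -- The point of `[a, c]` at distance `(b | c)_a + δ + η` from `a` (if any) is too far out to be
  -- `δ`-close to `[a, b]`, so it is `δ`-close to `[b, c]`.
  by_cases ht : gromovProduct a b c + δ + η ≤ dist a c
  · have hα₀ : 0 ≤ gromovProduct a b c := by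
      unfold gromovProduct
      linarith [dist_triangle_left b c a, dist_comm a b]
    obtain ⟨u, hu, hau⟩ := hac.exists_dist_eq (by linarith) ht
    obtain ⟨q, hq | hq, huq⟩ := hδ a b c sab s sac hab hs hac u hu
    · linarith [close_ab u hu q hq huq]
    · exact ⟨q, hq, by linarith [dist_triangle a u q]⟩
  · exact ⟨c, hs.right_mem, by linarith⟩

lemma fourPointCondition (hgeo : GeodesicSpace X) (hδ : DeltaHyperbolic X δ) :
    FourPointCondition X (3 * δ) := by
  intro w x y z
  refine le_of_forall_pos_le_add fun η hη => ?_
  obtain ⟨sxy, hxy⟩ := hgeo x y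
  obtain ⟨syz, hyz⟩ := hgeo y z
  obtain ⟨sxz, hxz⟩ := hgeo x z
  obtain ⟨q, hq, hwq⟩ := hδ.exists_mem_dist_le_gromovProduct hgeo w hxz hη
  obtain ⟨r, hr | hr, hqr⟩ := hδ x y z sxy syz sxz hxy hyz hxz q hq
  · linarith [min_le_left (gromovProduct w x y) (gromovProduct w y z),
      hxy.gromovProduct_le_dist w hr, dist_triangle w q r]
  · linarith [min_le_right (gromovProduct w x y) (gromovProduct w y z),
      hyz.gromovProduct_le_dist w hr, dist_triangle w q r]

end DeltaHyperbolic

section ThreePoints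

variable {X : Type*} [MetricSpace X] {κ ε : ℝ} {p : ℕ → X}

lemma two_mul_gromovProduct_le_of_three_points
    (hfour : FourPointCondition X κ) (hε : 2 * κ < ε) (hp : ThreePointsCondition p ε)
    {i : ℕ} (hi : 1 ≤ i) :
    2 * gromovProduct (p i) (p 1) (p (i+1)) ≤ dist (p i) (p (i+1)) - ε + 2 * κ := by
  induction i, hi using Nat.le_induction with
  | base =>
    have hκ : 0 ≤ κ := by simpa [gromovProduct] using hfour (p 1) (p 1) (p 1) (p 1)
    have := hp 1 le_rfl
    have := le_max_right (dist (p 1) (p 2)) (dist (p 2) (p 3))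
    have := dist_triangle (p 1) (p 2) (p 3)
    simp only [gromovProduct, dist_self, zero_add, sub_self, zero_div, mul_zero]
    linarith
  | succ i hi ih =>
    have := hp i hi
    have := le_max_left (dist (p i) (p (i+1))) (dist (p (i+1)) (p (i+2)))
    have := le_max_right (dist (p i) (p (i+1))) (dist (p (i+1)) (p (i+2)))
    -- The first branch contradicts `ih`, since
    -- `(p i | p 1)_{p (i+1)} + (p 1 | p (i+1))_{p i} = d(p i, p (i+1))`.
    rcases min_le_iff.1 (hfour (p (i+1)) (p i) (p 1) (p (i+2))) with h | h
    all_goals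
      simp only [gromovProduct] at ih h ⊢
      linarith [dist_comm (p i) (p (i+1)), dist_comm (p i) (p 1), dist_comm (p 1) (p (i+1))]

lemma mul_le_dist_of_three_points
    (hfour : FourPointCondition X κ) (hε : 2 * κ < ε) (hp : ThreePointsCondition p ε)
    {i : ℕ} (hi : 1 ≤ i) :
    ((i : ℝ) - 1) * (ε - 2 * κ) ≤ dist (p 1) (p i) := by
  induction i, hi using Nat.le_induction with
  | base => simp
  | succ i hi ih =>
    have h := two_mul_gromovProduct_le_of_three_points hfour hε hp hi
    simp only [gromovProduct] at h
    push_cast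
    linarith [dist_comm (p i) (p 1)]

end ThreePoints

-- The maximum `max_j d(p_j, p_{j+1})` is encoded by quantifying over its upper bounds `Mx`.
/-- Gromov's three points condition, Prop. 7.2C: if consecutive triples of
the sequence `(p_i)_{i ≥ 1}` satisfy
`d(p_i, p_{i+2}) ≥ max(d(p_i, p_{i+1}), d(p_{i+1}, p_{i+2})) + ε` with `ε > 100δ`, then for
every `i ≥ 3`, `λ · d(p_1, p_i) ≥ Σ_{j=1}^{i-1} d(p_j, p_{j+1})` where
`λ = (ε/100 − δ)⁻¹ · max_{1 ≤ j ≤ i−1} d(p_j, p_{j+1})`; in particular `d(p_1, p_i) > 0`.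
(The maximum is expressed by quantifying over all upper bounds `Mx` of the consecutive
distances, which is equivalent.) -/
theorem three_points_condition
    {X : Type*} [MetricSpace X] {δ ε : ℝ}
    (hgeo : GeodesicSpace X) (hδ : DeltaHyperbolic X δ) (hε : 100 * δ < ε)
    (p : ℕ → X)
    (hp : ∀ i : ℕ, 1 ≤ i →
      max (dist (p i) (p (i+1))) (dist (p (i+1)) (p (i+2))) + ε ≤ dist (p i) (p (i+2))) :
    ∀ i : ℕ, 3 ≤ i →
      (∀ Mx : ℝ, (∀ j ∈ Finset.Icc 1 (i-1), dist (p j) (p (j+1)) ≤ Mx) →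
        (∑ j ∈ Finset.Icc 1 (i-1), dist (p j) (p (j+1))) ≤
          ((ε / 100 - δ)⁻¹ * Mx) * dist (p 1) (p i)) ∧
      0 < dist (p 1) (p i) := by
  intro i hi
  have hδ₀ := hδ.nonneg_s5 hgeo (p 1)
  have hgrowth := mul_le_dist_of_three_points (hδ.fourPointCondition hgeo)
    (by linarith : 2 * (3 * δ) < ε) hp (by omega : 1 ≤ i)
  have hi₁ : (2 : ℝ) ≤ i - 1 := by
    have : (3 : ℝ) ≤ i := by exact_mod_cast hi
    linarith
  refine ⟨fun Mx hMx => ?_, by nlinarith⟩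
  have hMx₀ : 0 ≤ Mx := dist_nonneg.trans (hMx 1 (Finset.mem_Icc.2 ⟨le_rfl, by omega⟩))
  have hsum : ∑ j ∈ Finset.Icc 1 (i-1), dist (p j) (p (j+1)) ≤ ((i : ℝ) - 1) * Mx := by
    have := Finset.sum_le_card_nsmul _ _ _ hMx
    rwa [Nat.card_Icc, nsmul_eq_mul, show i - 1 + 1 - 1 = i - 1 by omega,
      Nat.cast_sub (by omega), Nat.cast_one] at this
  have hden : 0 < ε / 100 - δ := by linarith
  have hscale : 1 ≤ (ε / 100 - δ)⁻¹ * (ε - 2 * (3 * δ)) := by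
    rw [inv_mul_eq_div, one_le_div hden]
    linarith
  calc ∑ j ∈ Finset.Icc 1 (i-1), dist (p j) (p (j+1))
      ≤ ((i : ℝ) - 1) * Mx := hsum
    _ ≤ ((i : ℝ) - 1) * Mx * ((ε / 100 - δ)⁻¹ * (ε - 2 * (3 * δ))) :=
        le_mul_of_one_le_right (by positivity) hscale
    _ = (ε / 100 - δ)⁻¹ * Mx * (((i : ℝ) - 1) * (ε - 2 * (3 * δ))) := by ring
    _ ≤ (ε / 100 - δ)⁻¹ * Mx * dist (p 1) (p i) := by gcongr
end
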